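/- arXiv:1604.00802 — 2 statements merged into one kernel-verified Lean document; each statement's English description precedes it below -/
import Mathlib

section
/- (Main theorem.) Let Ω ⊆ ℝ^n be open, H : Ω × ℝ^{N×n} → [0,∞) continuous such that H(x,·) is rank-one level-convex for every x ∈ Ω, and let u ∈ C¹(Ω, ℝ^N) satisfy H(x, Du(x)) = c for all x ∈ Ω, with c ≥ 0. Then for every open Ω' compactly contained in Ω, every φ ∈ W^{1,∞}_0(Ω') (Lipschitz, vanishing on ∂Ω') and every ξ ∈ ℝ^N: ess sup_{Ω'} H(·, Du) ≤ ess sup_{Ω'} H(·, Du + ξ ⊗ Dφ). -/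
/-!
Suppose the right-hand side were some `a < c`. Extend `φ` to a Lipschitz function on `ℝⁿ`; it has
an interior local extremum `x₀` in `Ω'` (a minimum is turned into a maximum by passing to
`(-φ, -ξ)`). Rank-one level-convexity makes `{p | H(x₀, Du(x₀) + ξ ⊗ p) ≤ a + ε}` convex; it is
closed and misses `0` since `H(x₀, Du(x₀)) = c`, so a linear functional, i.e. a direction `e`,
separates it from `0`: `⟨p, e⟩ ≥ δ > 0` on it. By continuity of `H` and `Du`, the gradient of `φ`
lies in this set a.e. near `x₀`, so `∂ₑφ ≥ δ` a.e. near `x₀`. By Fubini this holds a.e. on almost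
every segment parallel to `e`, and integrating along one starting close to `x₀` (Lipschitz
functions of one variable are absolutely continuous) shows that `φ` exceeds `φ(x₀)` near `x₀`.
-/

open MeasureTheory

/-- A set of N×n real matrices is rank-one convex. -/
def RankOneConvex {N n : ℕ} (C : Set (Matrix (Fin N) (Fin n) ℝ)) : Prop :=
  ∀ A ∈ C, ∀ B ∈ C, (A - B).rank ≤ 1 →
    ∀ l : ℝ, l ∈ Set.Icc (0:ℝ) 1 → l • A + (1 - l) • B ∈ C

/-- The N×n Jacobian (gradient) matrix of a map `u : ℝⁿ → ℝᴺ` at a point. -/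
noncomputable def gradMat {n N : ℕ}
    (u : EuclideanSpace ℝ (Fin n) → EuclideanSpace ℝ (Fin N))
    (x : EuclideanSpace ℝ (Fin n)) : Matrix (Fin N) (Fin n) ℝ :=
  Matrix.of fun α i => fderiv ℝ u x (EuclideanSpace.single i 1) α

/-- The gradient (as a row vector) of a scalar function on ℝⁿ at a point
(junk value where the function is not differentiable; defined a.e. by Rademacher). -/
noncomputable def gradVec {n : ℕ} (g : EuclideanSpace ℝ (Fin n) → ℝ)
    (x : EuclideanSpace ℝ (Fin n)) : Fin n → ℝ :=
  fun i => fderiv ℝ g x (EuclideanSpace.single i 1)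

open Filter Set Topology Metric

theorem ae_ae_add_smul_of_ae {E : Type*} [NormedAddCommGroup E] [NormedSpace ℝ E]
    [SecondCountableTopology E] [MeasurableSpace E] [BorelSpace E] (μ : Measure E)
    [μ.IsAddRightInvariant] [SFinite μ]
    (ν : Measure ℝ) [SFinite ν] (e : E) {p : E → Prop} (hp : ∀ᵐ x ∂μ, p x) :
    ∀ᵐ y ∂μ, ∀ᵐ t ∂ν, p (y + t • e) := by
  set A := toMeasurable μ {x | ¬p x}
  have hA : MeasurableSet A := measurableSet_toMeasurable _ _
  have hAμ : μ A = 0 := by rw [measure_toMeasurable]; exact hp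
  have hC : MeasurableSet {z : E × ℝ | z.1 + z.2 • e ∈ A} :=
    (by fun_prop : Measurable fun z : E × ℝ => z.1 + z.2 • e) hA
  have hnull : μ.prod ν {z : E × ℝ | z.1 + z.2 • e ∈ A} = 0 := by
    rw [Measure.prod_apply_symm hC]
    change ∫⁻ t, μ ((· + t • e) ⁻¹' A) ∂ν = 0
    simp only [measure_preimage_add_right, hAμ, lintegral_zero]
  have hAe : ∀ᵐ z ∂μ.prod ν, z.1 + z.2 • e ∉ A := measure_eq_zero_iff_ae_notMem.1 hnull
  filter_upwards [Measure.ae_ae_of_ae_prod hAe] with y hy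
  filter_upwards [hy] with t ht
  by_contra h
  exact ht (subset_toMeasurable μ {x | ¬p x} h)

theorem LipschitzOnWith.mul_sub_le_sub_of_ae_le_deriv {g : ℝ → ℝ} {K : NNReal} {a b δ : ℝ}
    (hab : a ≤ b) (hg : LipschitzOnWith K g (Icc a b))
    (h : ∀ᵐ t ∂volume.restrict (Ioc a b), δ ≤ deriv g t) :
    δ * (b - a) ≤ g b - g a := by
  have hac := (uIcc_of_le hab ▸ hg).absolutelyContinuousOnInterval
  rw [← hac.integral_deriv_eq_sub, intervalIntegral.integral_of_le hab]
  calc δ * (b - a) = ∫ _ in Ioc a b, δ := by simp [hab, mul_comm]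
    _ ≤ ∫ t in Ioc a b, deriv g t :=
      setIntegral_mono_ae_restrict (integrableOn_const (by simp))
        hac.intervalIntegrable_deriv.1 h

theorem LipschitzWith.add_mul_le_of_ae_le_fderiv {E : Type*} [NormedAddCommGroup E]
    [NormedSpace ℝ E] {Φ : E → ℝ} {K : NNReal} (hΦ : LipschitzWith K Φ) {y e : E} {T δ : ℝ}
    (hT : 0 ≤ T) (hδ : 0 < δ)
    (h : ∀ᵐ t ∂volume.restrict (Ioc 0 T), δ ≤ fderiv ℝ Φ (y + t • e) e) :
    Φ y + δ * T ≤ Φ (y + T • e) := by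
  have hline : LipschitzWith (K * ‖e‖₊) fun t : ℝ => Φ (y + t • e) :=
    hΦ.comp <| LipschitzWith.of_dist_le_mul fun t s => by
      rw [dist_add_left, dist_eq_norm, ← sub_smul, norm_smul, Real.dist_eq, coe_nnnorm,
        mul_comm, Real.norm_eq_abs]
  have hpath (t : ℝ) : HasDerivAt (fun s : ℝ => y + s • e) e t := by
    simpa using ((hasDerivAt_id t).smul_const e).const_add y
  have hderiv : ∀ᵐ t ∂volume.restrict (Ioc 0 T), δ ≤ deriv (fun t => Φ (y + t • e)) t := by
    filter_upwards [h] with t ht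
    -- `fderiv` is `0` where `Φ` is not differentiable, so `0 < δ ≤ fderiv ℝ Φ _ e` rules that out.
    have hd : DifferentiableAt ℝ Φ (y + t • e) := by
      by_contra hnd
      rw [fderiv_zero_of_not_differentiableAt hnd, zero_apply] at ht
      linarith
    exact ht.trans_eq (hd.hasFDerivAt.comp_hasDerivAt t (hpath t)).deriv.symm
  have key := (hline.lipschitzOnWith (s := Icc 0 T)).mul_sub_le_sub_of_ae_le_deriv hT hderiv
  simp only [zero_smul, add_zero, sub_zero] at key
  linarith

theorem LipschitzWith.not_isLocalMax_of_ae_le_fderiv {E : Type*} [NormedAddCommGroup E]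
    [NormedSpace ℝ E] [FiniteDimensional ℝ E] [MeasurableSpace E] [BorelSpace E]
    (μ : Measure E) [μ.IsAddHaarMeasure] {Φ : E → ℝ} {K : NNReal} (hΦ : LipschitzWith K Φ)
    {x₀ e : E} {U : Set E} (hU : U ∈ 𝓝 x₀) {δ : ℝ} (hδ : 0 < δ)
    (h : ∀ᵐ x ∂μ, x ∈ U → δ ≤ fderiv ℝ Φ x e) : ¬IsLocalMax Φ x₀ := by
  intro hmax
  obtain ⟨r, hr, hball⟩ := Metric.mem_nhds_iff.1 (inter_mem hU hmax)
  -- Segments of length `T ‖e‖` starting in `ball x₀ ρ` stay in `ball x₀ r`, and `K ρ ≤ δ T / 2`.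
  set T := r / (2 * (‖e‖ + 1))
  have hT : 0 < T := by positivity
  set ρ := min (r / 2) (δ * T / (2 * (K + 1)))
  have hρ : 0 < ρ := by positivity
  have : (ae (μ.restrict (ball x₀ ρ))).NeBot :=
    ae_restrict_neBot.2 (measure_ball_pos μ x₀ hρ).ne'
  have hgood := ae_restrict_of_ae (s := ball x₀ ρ)
    (ae_ae_add_smul_of_ae μ (volume.restrict (Ioc 0 T)) e h)
  obtain ⟨y, hy, hyρ⟩ := (hgood.and (ae_restrict_mem measurableSet_ball)).exists
  have hseg : ∀ t ∈ Icc 0 T, y + t • e ∈ ball x₀ r := by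
    intro t ht
    have hTe : T * ‖e‖ < r / 2 := by
      rw [div_mul_eq_mul_div, div_lt_div_iff₀ (by positivity) two_pos]
      nlinarith [norm_nonneg e]
    calc dist (y + t • e) x₀ ≤ ‖t • e‖ + dist y x₀ := by
          simpa [dist_add_left] using dist_triangle (y + t • e) y x₀
      _ < r / 2 + r / 2 := by
          rw [norm_smul, Real.norm_of_nonneg ht.1]
          exact add_lt_add_of_le_of_lt
            ((mul_le_mul_of_nonneg_right ht.2 (norm_nonneg e)).trans hTe.le)
            ((mem_ball.1 hyρ).trans_le (min_le_left _ _))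
      _ = r := add_halves r
  have hincr := hΦ.add_mul_le_of_ae_le_fderiv (y := y) hT.le hδ (by
    filter_upwards [hy, ae_restrict_mem measurableSet_Ioc] with t ht htT
    exact ht (hball (hseg t (Ioc_subset_Icc_self htT))).1)
  have hyx₀ : Φ x₀ - δ * T / 2 ≤ Φ y := by
    have hKρ : K * ρ ≤ δ * T / 2 := by
      calc (K : ℝ) * ρ ≤ K * (δ * T / (2 * (K + 1))) := by gcongr; exact min_le_right _ _
        _ ≤ δ * T / 2 := by
          rw [mul_div_assoc', div_le_div_iff₀ (by positivity) two_pos]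
          nlinarith [mul_pos hδ hT, K.coe_nonneg]
    have hLip := hΦ.dist_le_mul y x₀
    rw [Real.dist_eq] at hLip
    nlinarith [neg_abs_le (Φ y - Φ x₀), mem_ball.1 hyρ, K.coe_nonneg]
  have hmax' : Φ (y + T • e) ≤ Φ x₀ := (hball (hseg T ⟨hT.le, le_rfl⟩)).2
  linarith [mul_pos hδ hT]

theorem exists_fderiv_apply_eq_apply_gradVec {n : ℕ} (f : (Fin n → ℝ) →L[ℝ] ℝ) :
    ∃ e : EuclideanSpace ℝ (Fin n), ∀ (Φ : EuclideanSpace ℝ (Fin n) → ℝ) x,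
      fderiv ℝ Φ x e = f (gradVec Φ x) := by
  refine ⟨WithLp.toLp 2 fun i => f (Pi.single i 1), fun Φ x => ?_⟩
  conv_lhs => rw [← (EuclideanSpace.basisFun (Fin n) ℝ).sum_repr (WithLp.toLp 2 _)]
  conv_rhs => rw [← Finset.univ_sum_single (gradVec Φ x)]
  simp only [map_sum, EuclideanSpace.basisFun_repr, EuclideanSpace.basisFun_apply, map_smul,
    smul_eq_mul, gradVec]
  refine Finset.sum_congr rfl fun i _ => ?_
  set d := fderiv ℝ Φ x (EuclideanSpace.single i 1)
  rw [show (Pi.single i d : Fin n → ℝ) = d • Pi.single i 1 by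
    rw [← Pi.single_smul, smul_eq_mul, mul_one], map_smul, smul_eq_mul, mul_comm]

theorem LipschitzWith.norm_gradVec_le {n : ℕ} {Φ : EuclideanSpace ℝ (Fin n) → ℝ} {K : NNReal}
    (hΦ : LipschitzWith K Φ) (x : EuclideanSpace ℝ (Fin n)) : ‖gradVec Φ x‖ ≤ K :=
  (pi_norm_le_iff_of_nonneg K.coe_nonneg).2 fun i =>
    ((fderiv ℝ Φ x).le_opNorm _).trans (by simpa using norm_fderiv_le_of_lipschitz ℝ hΦ)

theorem gradVec_neg {n : ℕ} (Φ : EuclideanSpace ℝ (Fin n) → ℝ) (x : EuclideanSpace ℝ (Fin n)) :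
    gradVec (-Φ) x = -gradVec Φ x := by
  funext i
  simp [gradVec, fderiv_neg]

theorem Filter.EventuallyEq.gradVec_eq {n : ℕ} {Φ Ψ : EuclideanSpace ℝ (Fin n) → ℝ}
    {x : EuclideanSpace ℝ (Fin n)} (h : Φ =ᶠ[𝓝 x] Ψ) : gradVec Φ x = gradVec Ψ x := by
  unfold gradVec
  rw [h.fderiv_eq]

theorem ContDiffOn.continuousOn_gradMat {n N : ℕ} {Ω : Set (EuclideanSpace ℝ (Fin n))}
    {u : EuclideanSpace ℝ (Fin n) → EuclideanSpace ℝ (Fin N)} (hu : ContDiffOn ℝ 1 u Ω)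
    (hΩ : IsOpen Ω) : ContinuousOn (gradMat u) Ω := by
  have hDu := hu.continuousOn_fderiv_of_isOpen hΩ le_rfl
  refine continuousOn_pi.2 fun α => continuousOn_pi.2 fun i => ?_
  exact ((PiLp.continuous_apply 2 _ α).comp
    (ContinuousLinearMap.apply ℝ _ (EuclideanSpace.single i 1)).continuous).comp_continuousOn
      hDu

theorem RankOneConvex.convex_setOf_add_vecMulVec_mem {N n : ℕ}
    {C : Set (Matrix (Fin N) (Fin n) ℝ)} (hC : RankOneConvex C) (A : Matrix (Fin N) (Fin n) ℝ)
    (w : Fin N → ℝ) : Convex ℝ {b : Fin n → ℝ | A + Matrix.vecMulVec w b ∈ C} := by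
  intro b₁ hb₁ b₂ hb₂ l₁ l₂ hl₁ hl₂ hl
  obtain rfl : l₂ = 1 - l₁ := by linarith
  have hrank : (A + Matrix.vecMulVec w b₁ - (A + Matrix.vecMulVec w b₂)).rank ≤ 1 := by
    rw [add_sub_add_left_eq_sub, ← Matrix.vecMulVec_sub]
    exact Matrix.rank_vecMulVec_le _ _
  show A + Matrix.vecMulVec w (l₁ • b₁ + (1 - l₁) • b₂) ∈ C
  convert hC _ hb₁ _ hb₂ hrank l₁ ⟨hl₁, by linarith⟩ using 1
  simp only [Matrix.vecMulVec_add, Matrix.vecMulVec_smul]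
  module

theorem IsOpen.exists_isLocalExtr_of_eqOn_frontier {X : Type*} [TopologicalSpace X] {U : Set X}
    (hU : IsOpen U) (hne : U.Nonempty) (hK : IsCompact (closure U)) {f : X → ℝ}
    (hf : ContinuousOn f (closure U)) {c : ℝ} (hc : ∀ y ∈ frontier U, f y = c) :
    ∃ x ∈ U, IsLocalExtr f x := by
  obtain ⟨x₁, hx₁, hmax⟩ := hK.exists_isMaxOn hne.closure hf
  obtain ⟨x₂, hx₂, hmin⟩ := hK.exists_isMinOn hne.closure hf
  have hnhds {x} (hx : x ∈ U) : closure U ∈ 𝓝 x :=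
    mem_of_superset (hU.mem_nhds hx) subset_closure
  by_cases h₁ : x₁ ∈ U
  · exact ⟨x₁, h₁, IsMaxFilter.isExtr (hmax.isLocalMax (hnhds h₁))⟩
  by_cases h₂ : x₂ ∈ U
  · exact ⟨x₂, h₂, IsMinFilter.isExtr (hmin.isLocalMin (hnhds h₂))⟩
  have hfr {x} (hx : x ∈ closure U) (hxU : x ∉ U) : f x = c :=
    hc x ⟨hx, by rwa [hU.interior_eq]⟩
  obtain ⟨z, hz⟩ := hne
  refine ⟨z, hz, IsMaxFilter.isExtr (IsMaxOn.isLocalMax (fun y hy => ?_) (hnhds hz))⟩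
  have hy₁ : f y ≤ f x₁ := hmax hy
  have hz₂ : f x₂ ≤ f z := hmin (subset_closure hz)
  show f y ≤ f z
  linarith [hfr hx₁ h₁, hfr hx₂ h₂]

theorem LipschitzWith.not_isLocalMax_of_ae_le_of_quasiconvexOn {n : ℕ}
    (μ : Measure (EuclideanSpace ℝ (Fin n))) [μ.IsAddHaarMeasure]
    {F : EuclideanSpace ℝ (Fin n) → (Fin n → ℝ) → ℝ} {x₀ : EuclideanSpace ℝ (Fin n)}
    (hF : ∀ b, ContinuousAt (Function.uncurry F) (x₀, b)) (hFq : QuasiconvexOn ℝ univ (F x₀))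
    {Φ : EuclideanSpace ℝ (Fin n) → ℝ} {K : NNReal} (hΦ : LipschitzWith K Φ)
    {U : Set (EuclideanSpace ℝ (Fin n))} (hU : U ∈ 𝓝 x₀) {a : ℝ} (ha : a < F x₀ 0)
    (h : ∀ᵐ x ∂μ, x ∈ U → F x (gradVec Φ x) ≤ a) : ¬IsLocalMax Φ x₀ := by
  obtain ⟨ε, hε, haε⟩ : ∃ ε, 0 < ε ∧ a + ε < F x₀ 0 :=
    ⟨(F x₀ 0 - a) / 2, by linarith, by linarith⟩
  have hcont : Continuous (F x₀) := continuous_iff_continuousAt.2 fun b =>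
    (hF b).comp (continuousAt_const.prodMk continuousAt_id)
  obtain ⟨f, δ, hf0, hfS⟩ := geometric_hahn_banach_point_closed
    (by simpa using hFq (a + ε)) (isClosed_le hcont continuous_const)
    (show (0 : Fin n → ℝ) ∉ {b | F x₀ b ≤ a + ε} from haε.not_ge)
  obtain ⟨e, he⟩ := exists_fderiv_apply_eq_apply_gradVec f
  have hnear : ∀ᶠ x in 𝓝 x₀, ∀ b ∈ closedBall (0 : Fin n → ℝ) K, F x₀ b < F x b + ε :=
    (isCompact_closedBall _ _).eventually_forall_of_forall_eventually fun b _ =>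
      (hcont.continuousAt.comp continuousAt_snd).eventually_lt
        ((hF b).add continuousAt_const) (lt_add_of_pos_right _ hε)
  refine hΦ.not_isLocalMax_of_ae_le_fderiv μ (e := e) (inter_mem hU hnear)
    (by simpa using hf0) ?_
  filter_upwards [h] with x hx hxU
  have hball : gradVec Φ x ∈ closedBall (0 : Fin n → ℝ) K := by
    simpa using hΦ.norm_gradVec_le x
  rw [he]
  exact (hfS _ (show F x₀ (gradVec Φ x) ≤ a + ε by
    linarith [hx hxU.1, hxU.2 _ hball])).le

theorem continuousOn_add_vecMulVec {X : Type*} [TopologicalSpace X] {N n : ℕ} {Ω : Set X}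
    {H : X → Matrix (Fin N) (Fin n) ℝ → ℝ}
    (hH : ContinuousOn (fun q : X × Matrix (Fin N) (Fin n) ℝ => H q.1 q.2) (Ω ×ˢ univ))
    {G : X → Matrix (Fin N) (Fin n) ℝ} (hG : ContinuousOn G Ω) (w : Fin N → ℝ) :
    ContinuousOn (fun p : X × (Fin n → ℝ) => H p.1 (G p.1 + Matrix.vecMulVec w p.2))
      (Ω ×ˢ univ) := by
  refine hH.comp (continuousOn_fst.prodMk ((hG.comp continuousOn_fst fun p hp => hp.1).add
    ?_)) fun p hp => ⟨hp.1, trivial⟩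
  fun_prop

section RankOneConvexHamiltonian

variable {n N : ℕ} (μ : Measure (EuclideanSpace ℝ (Fin n))) [μ.IsAddHaarMeasure]
  {Ω : Set (EuclideanSpace ℝ (Fin n))} {H : EuclideanSpace ℝ (Fin n) → Matrix (Fin N) (Fin n) ℝ → ℝ}
  {G : EuclideanSpace ℝ (Fin n) → Matrix (Fin N) (Fin n) ℝ}

theorem LipschitzWith.not_isLocalMax_of_ae_le_of_rankOneConvex (hΩ : IsOpen Ω)
    (hHc : ContinuousOn (fun q : EuclideanSpace ℝ (Fin n) × Matrix (Fin N) (Fin n) ℝ =>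
      H q.1 q.2) (Ω ×ˢ univ))
    (hHrc : ∀ x ∈ Ω, ∀ t : ℝ, RankOneConvex {P | H x P ≤ t}) (hG : ContinuousOn G Ω)
    (w : Fin N → ℝ) {x₀ : EuclideanSpace ℝ (Fin n)} (hx₀ : x₀ ∈ Ω)
    {Φ : EuclideanSpace ℝ (Fin n) → ℝ} {K : NNReal} (hΦ : LipschitzWith K Φ)
    {U : Set (EuclideanSpace ℝ (Fin n))} (hU : U ∈ 𝓝 x₀) {a : ℝ} (ha : a < H x₀ (G x₀))
    (h : ∀ᵐ x ∂μ, x ∈ U → H x (G x + Matrix.vecMulVec w (gradVec Φ x)) ≤ a) :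
    ¬IsLocalMax Φ x₀ := by
  refine hΦ.not_isLocalMax_of_ae_le_of_quasiconvexOn μ
    (F := fun x b => H x (G x + Matrix.vecMulVec w b)) (fun b => ?_) (fun t => ?_) hU ?_ h
  · exact (continuousOn_add_vecMulVec hHc hG w).continuousAt
      (prod_mem_nhds (hΩ.mem_nhds hx₀) univ_mem)
  · simpa using (hHrc x₀ hx₀ t).convex_setOf_add_vecMulVec_mem (G x₀) w
  · convert ha using 3
    ext
    simp [Matrix.vecMulVec_apply]

theorem exists_le_of_ae_le_of_rankOneConvex (hΩ : IsOpen Ω)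
    (hHc : ContinuousOn (fun q : EuclideanSpace ℝ (Fin n) × Matrix (Fin N) (Fin n) ℝ =>
      H q.1 q.2) (Ω ×ˢ univ))
    (hHrc : ∀ x ∈ Ω, ∀ t : ℝ, RankOneConvex {P | H x P ≤ t}) (hG : ContinuousOn G Ω)
    {Ω' : Set (EuclideanSpace ℝ (Fin n))} (hΩ' : IsOpen Ω') (hne : Ω'.Nonempty)
    (hcpt : IsCompact (closure Ω')) (hΩ'Ω : Ω' ⊆ Ω)
    {Φ : EuclideanSpace ℝ (Fin n) → ℝ} {K : NNReal} (hΦ : LipschitzWith K Φ)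
    (hΦ0 : ∀ y ∈ frontier Ω', Φ y = 0) (w : Fin N → ℝ) {a : ℝ}
    (ha : ∀ᵐ x ∂μ.restrict Ω', H x (G x + Matrix.vecMulVec w (gradVec Φ x)) ≤ a) :
    ∃ x ∈ Ω', H x (G x) ≤ a := by
  obtain ⟨x₀, hx₀, hext⟩ :=
    hΩ'.exists_isLocalExtr_of_eqOn_frontier hne hcpt hΦ.continuous.continuousOn hΦ0
  refine ⟨x₀, hx₀, le_of_not_gt fun hax₀ => ?_⟩
  rw [ae_restrict_iff' hΩ'.measurableSet] at ha
  rcases hext with hmin | hmax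
  · refine hΦ.neg.not_isLocalMax_of_ae_le_of_rankOneConvex μ hΩ hHc hHrc hG (-w)
      (hΩ'Ω hx₀) (hΩ'.mem_nhds hx₀) hax₀ ?_ hmin.neg
    simpa [gradVec_neg] using ha
  · exact hΦ.not_isLocalMax_of_ae_le_of_rankOneConvex μ hΩ hHc hHrc hG w
      (hΩ'Ω hx₀) (hΩ'.mem_nhds hx₀) hax₀ ha hmax

end RankOneConvexHamiltonian

theorem stmt_13_general {n N : ℕ} (Ω : Set (EuclideanSpace ℝ (Fin n))) (hΩ : IsOpen Ω)
    (H : EuclideanSpace ℝ (Fin n) → Matrix (Fin N) (Fin n) ℝ → ℝ)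
    (hHc : ContinuousOn (fun q : EuclideanSpace ℝ (Fin n) × Matrix (Fin N) (Fin n) ℝ =>
      H q.1 q.2) (Ω ×ˢ Set.univ))
    (hHrc : ∀ x ∈ Ω, ∀ t : ℝ, RankOneConvex {P | H x P ≤ t})
    (u : EuclideanSpace ℝ (Fin n) → EuclideanSpace ℝ (Fin N))
    (hu : ContDiffOn ℝ 1 u Ω)
    (c : ℝ) (hHJ : ∀ x ∈ Ω, H x (gradMat u x) = c) :
    ∀ Ω' : Set (EuclideanSpace ℝ (Fin n)), IsOpen Ω' → closure Ω' ⊆ Ω →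
      IsCompact (closure Ω') →
    ∀ φ : EuclideanSpace ℝ (Fin n) → ℝ, ∀ L : NNReal,
      LipschitzOnWith L φ (closure Ω') → (∀ y ∈ frontier Ω', φ y = 0) →
    ∀ ξ : EuclideanSpace ℝ (Fin N),
      essSup (fun x => H x (gradMat u x)) (volume.restrict Ω') ≤
      essSup (fun x => H x (gradMat u x + Matrix.of fun α i => ξ α * gradVec φ x i))
        (volume.restrict Ω') := by
  intro Ω' hΩ' hclΩ hcpt φ L hφ hφ0 ξ
  obtain ⟨Φ, hΦ, hφΦ⟩ := hφ.extend_real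
  rcases Ω'.eq_empty_or_nonempty with rfl | hne
  · simp only [Measure.restrict_empty]
    exact (essSup_congr_ae (by simp [EventuallyEq])).le
  have hμ : volume.restrict Ω' ≠ 0 := by
    simpa [Measure.restrict_eq_zero] using hΩ'.measure_ne_zero volume hne
  have hG := hu.continuousOn_gradMat hΩ
  have hΩ'Ω : Ω' ⊆ Ω := subset_closure.trans hclΩ
  have hLHS : (fun x => H x (gradMat u x)) =ᵐ[volume.restrict Ω'] fun _ => c := by
    filter_upwards [ae_restrict_mem hΩ'.measurableSet] with x hx using hHJ x (hΩ'Ω hx)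
  have hRHS : (fun x => H x (gradMat u x + Matrix.of fun α i => ξ α * gradVec φ x i))
      =ᵐ[volume.restrict Ω'] fun x => H x (gradMat u x + Matrix.vecMulVec ξ (gradVec Φ x)) := by
    filter_upwards [ae_restrict_mem hΩ'.measurableSet] with x hx
    rw [EventuallyEq.gradVec_eq (eventually_of_mem (hΩ'.mem_nhds hx) fun y hy =>
      hφΦ (subset_closure hy))]
    rfl
  rw [essSup_congr_ae hLHS, essSup_const c hμ, essSup_congr_ae hRHS]
  -- On `ℝ`, `essSup` is a `limsup`, which is only meaningful for a.e. bounded-above functions.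
  refine le_limsup_of_le ?_ fun a ha => ?_
  · obtain ⟨C, hC⟩ := (hcpt.prod (isCompact_closedBall 0 L)).exists_bound_of_continuousOn
      ((continuousOn_add_vecMulVec hHc hG ξ).mono fun p hp => ⟨hclΩ hp.1, trivial⟩)
    refine isBoundedUnder_of_eventually_le (a := C) ?_
    filter_upwards [ae_restrict_mem hΩ'.measurableSet] with x hx
    exact (le_abs_self _).trans
      (hC (x, gradVec Φ x) ⟨subset_closure hx, by simpa using hΦ.norm_gradVec_le x⟩)
  obtain ⟨x₀, hx₀, hx₀a⟩ := exists_le_of_ae_le_of_rankOneConvex volume hΩ hHc hHrc hG hΩ'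
    hne hcpt hΩ'Ω hΦ (fun y hy => (hφΦ (frontier_subset_closure hy)).symm.trans (hφ0 y hy))
    ξ ha
  exact hHJ x₀ (hΩ'Ω hx₀) ▸ hx₀a

theorem stmt_13 {n N : ℕ} (Ω : Set (EuclideanSpace ℝ (Fin n))) (hΩ : IsOpen Ω)
    (H : EuclideanSpace ℝ (Fin n) → Matrix (Fin N) (Fin n) ℝ → ℝ)
    (hHnn : ∀ x ∈ Ω, ∀ P, 0 ≤ H x P)
    (hHc : ContinuousOn (fun q : EuclideanSpace ℝ (Fin n) × Matrix (Fin N) (Fin n) ℝ =>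
      H q.1 q.2) (Ω ×ˢ Set.univ))
    (hHrc : ∀ x ∈ Ω, ∀ t : ℝ, RankOneConvex {P | H x P ≤ t})
    (u : EuclideanSpace ℝ (Fin n) → EuclideanSpace ℝ (Fin N))
    (hu : ContDiffOn ℝ 1 u Ω)
    (c : ℝ) (hc : 0 ≤ c) (hHJ : ∀ x ∈ Ω, H x (gradMat u x) = c) :
    ∀ Ω' : Set (EuclideanSpace ℝ (Fin n)), IsOpen Ω' → closure Ω' ⊆ Ω →
      IsCompact (closure Ω') →
    ∀ φ : EuclideanSpace ℝ (Fin n) → ℝ, ∀ L : NNReal,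
      LipschitzOnWith L φ (closure Ω') → (∀ y ∈ frontier Ω', φ y = 0) →
    ∀ ξ : EuclideanSpace ℝ (Fin N),
      essSup (fun x => H x (gradMat u x)) (volume.restrict Ω') ≤
      essSup (fun x => H x (gradMat u x + Matrix.of fun α i => ξ α * gradVec φ x i))
        (volume.restrict Ω') :=
  stmt_13_general Ω hΩ H hHc hHrc u hu c hHJ
end

section
/- (Scalar Eikonal case.) Let Ω ⊆ ℝ^n be open and u ∈ C¹(Ω) satisfy |Du(x)| = c for all x ∈ Ω, with c ≥ 0. Then for every open Ω' ⋐ Ω and every Lipschitz φ : Ω' → ℝ vanishing on ∂Ω', ess sup_{Ω'} |Du| ≤ ess sup_{Ω'} |Du + Dφ|; i.e., u is an absolute minimiser of the L^∞ norm of the gradient. (This is the special case N = 1, H(x,P) = |P| of the main theorem, using that the Euclidean norm is level-convex.) -/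
/-!
Suppose `M := ess sup |D(u + φ)| < c` on `Ω'`. By Rademacher's theorem and Fubini along almost
every translate of a segment, `v := u + φ` is `M`-Lipschitz near every point of `Ω'`. At an
interior maximum `y` of `u - v` we would get `u z - u y ≤ v z - v y ≤ M |z - y|` near `y`, hence
`|Du(y)| ≤ M < c`. So `u - v = -φ` attains its maximum over the compact set `closure Ω'` only on
`∂Ω'`, where it vanishes, and `φ > 0` in `Ω'`; the same argument for `-u` and `-v` gives `φ < 0`.
-/

open MeasureTheory Filter Metric Set Topology
open scoped NNReal

theorem abs_sub_le_of_ae_abs_deriv_le {h : ℝ → ℝ} {K : ℝ≥0} {a b C : ℝ}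
    (hh : LipschitzOnWith K h (uIcc a b)) (hC : ∀ᵐ t, t ∈ uIcc a b → |deriv h t| ≤ C) :
    |h b - h a| ≤ C * |b - a| := by
  rw [← hh.absolutelyContinuousOnInterval.integral_deriv_eq_sub, ← Real.norm_eq_abs]
  refine intervalIntegral.norm_integral_le_of_norm_le_const_ae ?_
  filter_upwards [hC] with t ht hts using ht (uIoc_subset_uIcc hts)

theorem IsOpen.lt_of_frontier_le_of_not_isLocalMax {X β : Type*} [TopologicalSpace X]
    [LinearOrder β] [TopologicalSpace β] [ClosedIciTopology β] {U : Set X} (hU : IsOpen U)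
    (hK : IsCompact (closure U)) {F : X → β} (hF : ContinuousOn F (closure U)) {a : β}
    (hfr : ∀ y ∈ frontier U, F y ≤ a) (hmax : ∀ y ∈ U, ¬ IsLocalMax F y) :
    ∀ x ∈ U, F x < a := by
  intro x hx
  have hmaxOn : ∀ z ∈ U, ¬ IsMaxOn F (closure U) z := fun z hz h =>
    hmax z hz (h.isLocalMax (mem_of_superset (hU.mem_nhds hz) subset_closure))
  obtain ⟨y, hyK, hy⟩ := hK.exists_isMaxOn ⟨x, subset_closure hx⟩ hF
  have hyU : y ∉ U := fun hyU => hmaxOn y hyU hy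
  have hxy : F x < F y := lt_of_not_ge fun h =>
    hmaxOn x hx fun z hz => (hy hz).trans h
  exact hxy.trans_le (hfr y ⟨hyK, by rwa [hU.interior_eq]⟩)

section

variable {E : Type*} [NormedAddCommGroup E] [NormedSpace ℝ E]

theorem dist_le_of_ae_norm_fderiv_le_on_segment {f : E → ℝ} {K M : ℝ≥0} {s : Set E} {x y : E}
    (hf : LipschitzOnWith K f s) (hxy : segment ℝ x y ⊆ s)
    (hM : ∀ᵐ t : ℝ, x + t • (y - x) ∈ s →
      DifferentiableAt ℝ f (x + t • (y - x)) ∧ ‖fderiv ℝ f (x + t • (y - x))‖ ≤ M) :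
    dist (f x) (f y) ≤ M * dist x y := by
  set γ : ℝ → E := fun t => x + t • (y - x)
  have hγ : ∀ t, HasDerivAt γ (y - x) t := fun t => by
    simpa only [one_smul] using ((hasDerivAt_id' t).smul_const (y - x)).const_add x
  have hγs : MapsTo γ (uIcc 0 1) s := fun t ht =>
    hxy (segment_eq_image' ℝ x y ▸ mem_image_of_mem γ (by simpa using ht))
  have hγlip : LipschitzWith ‖y - x‖₊ γ := LipschitzWith.of_dist_le_mul fun s t => by
    simp [γ, dist_eq_norm, ← sub_smul, norm_smul, mul_comm]
  have key := abs_sub_le_of_ae_abs_deriv_le (hf.comp hγlip.lipschitzOnWith hγs)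
    (C := M * ‖y - x‖) <| by
      filter_upwards [hM] with t ht hts
      obtain ⟨hd, hn⟩ := ht (hγs hts)
      rw [(hd.hasFDerivAt.comp_hasDerivAt t (hγ t)).deriv, ← Real.norm_eq_abs]
      exact ((fderiv ℝ f (γ t)).le_opNorm _).trans (by gcongr)
  simpa [γ, Real.dist_eq, dist_eq_norm, abs_sub_comm, norm_sub_rev] using key

theorem HasFDerivAt.norm_le_of_eventually_sub_le {f : E → ℝ} {f' : E →L[ℝ] ℝ} {x : E} {C : ℝ}
    (hf : HasFDerivAt f f' x) (hC : 0 ≤ C) (h : ∀ᶠ z in 𝓝 x, f z - f x ≤ C * ‖z - x‖) :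
    ‖f'‖ ≤ C := by
  have key : ∀ v, f' v ≤ C * ‖v‖ := by
    intro v
    refine le_of_tendsto (hf.lim_real v) ?_
    have hsmall : Tendsto (fun c : ℝ => x + c⁻¹ • v) atTop (𝓝 x) := by
      simpa using tendsto_const_nhds.add ((tendsto_inv_atTop_zero (𝕜 := ℝ)).smul_const v)
    filter_upwards [hsmall.eventually h, eventually_gt_atTop 0] with c hc hc0
    calc c • (f (x + c⁻¹ • v) - f x) ≤ c * (C * ‖c⁻¹ • v‖) := by
          rw [smul_eq_mul]; gcongr; simpa using hc
      _ = C * ‖v‖ := by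
          rw [norm_smul, norm_inv, Real.norm_of_nonneg hc0.le]; field_simp
  refine ContinuousLinearMap.opNorm_le_bound f' hC fun v => abs_le.2 ⟨?_, key v⟩
  have := key (-v)
  simp only [map_neg, norm_neg] at this
  linarith

theorem not_isLocalMax_sub_of_lipschitzOnWith {u v : E → ℝ} {u' : E →L[ℝ] ℝ} {y : E}
    {s : Set E} {M : ℝ≥0} (hu : HasFDerivAt u u' y) (hv : LipschitzOnWith M v s) (hs : s ∈ 𝓝 y)
    (hM : M < ‖u'‖) : ¬ IsLocalMax (u - v) y := by
  intro hmax
  refine hM.not_ge (hu.norm_le_of_eventually_sub_le M.coe_nonneg ?_)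
  filter_upwards [hmax, hs] with z hz hzs
  have hvz := hv.dist_le_mul z hzs y (mem_of_mem_nhds hs)
  rw [Real.dist_eq] at hvz
  simp only [Pi.sub_apply, ← dist_eq_norm] at hz ⊢
  linarith [le_abs_self (v z - v y)]

theorem le_of_lipschitzOnWith_of_le_norm_fderiv {U : Set E} (hU : IsOpen U) (hne : U.Nonempty)
    (hK : IsCompact (closure U)) {u v : E → ℝ} {c : ℝ} {M : ℝ≥0}
    (hu : ∀ y ∈ U, DifferentiableAt ℝ u y) (hc : ∀ y ∈ U, c ≤ ‖fderiv ℝ u y‖)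
    (hv : ∀ y ∈ U, ∃ s ∈ 𝓝 y, LipschitzOnWith M v s)
    (hcont : ContinuousOn (u - v) (closure U)) (hfr : EqOn u v (frontier U)) : c ≤ M := by
  by_contra! hlt
  obtain ⟨x, hx⟩ := hne
  have hneg := hU.lt_of_frontier_le_of_not_isLocalMax hK hcont (a := 0)
    (fun y hy => by simp [hfr hy]) fun y hy => by
      obtain ⟨s, hs, hvs⟩ := hv y hy
      exact not_isLocalMax_sub_of_lipschitzOnWith (hu y hy).hasFDerivAt hvs hs
        (hlt.trans_le (hc y hy))
  have hpos := hU.lt_of_frontier_le_of_not_isLocalMax hK (F := -u - -v) (a := 0)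
    (by rw [neg_sub_neg, ← neg_sub]; exact hcont.neg)
    (fun y hy => by simp [hfr hy]) fun y hy => by
      obtain ⟨s, hs, hvs⟩ := hv y hy
      exact not_isLocalMax_sub_of_lipschitzOnWith (hu y hy).hasFDerivAt.neg hvs.neg hs
        (by rw [norm_neg]; exact hlt.trans_le (hc y hy))
  have h₁ := hneg x hx
  have h₂ := hpos x hx
  simp only [Pi.sub_apply, Pi.neg_apply] at h₁ h₂
  linarith

variable [MeasurableSpace E] [BorelSpace E] [FiniteDimensional ℝ E] {μ : Measure E}
  [μ.IsAddHaarMeasure]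

theorem ae_ae_add_add_smul_of_ae {p : E → Prop} (hp : ∀ᵐ z ∂μ, p z) (a w : E) :
    ∀ᵐ ζ ∂μ, ∀ᵐ t : ℝ, p (a + ζ + t • w) := by
  set N := toMeasurable μ {z | ¬ p z}
  set S : Set (E × ℝ) := {q | a + q.1 + q.2 • w ∈ N}
  have hS : MeasurableSet S := (measurableSet_toMeasurable _ _).preimage (by fun_prop)
  -- every horizontal slice of `S` is a translate of the null set `N`
  have hslice : ∀ t : ℝ, μ ((fun ζ => (ζ, t)) ⁻¹' S) = 0 := fun t => by
    have : (fun ζ => (ζ, t)) ⁻¹' S = (· + (a + t • w)) ⁻¹' N := by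
      ext ζ
      change _ ∈ N ↔ _ ∈ N
      rw [add_comm a ζ, add_assoc]
    rw [this, measure_preimage_add_right, measure_toMeasurable]
    exact hp
  have hnull : μ.prod volume S = 0 := by simp [Measure.prod_apply_symm hS, hslice]
  filter_upwards [Measure.measure_ae_null_of_prod_null hnull] with ζ hζ
  filter_upwards [measure_eq_zero_iff_ae_notMem.1 hζ] with t ht
  by_contra h
  exact ht (subset_toMeasurable _ _ h)

theorem LipschitzOnWith.of_ae_norm_fderiv_le {f : E → ℝ} {K M : ℝ≥0} {s : Set E}
    (hconv : Convex ℝ s) (hopen : IsOpen s) (hf : LipschitzOnWith K f s)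
    (hM : ∀ᵐ z ∂μ, z ∈ s → ‖fderiv ℝ f z‖ ≤ M) : LipschitzOnWith M f s := by
  have hgood : ∀ᵐ z ∂μ, z ∈ s → DifferentiableAt ℝ f z ∧ ‖fderiv ℝ f z‖ ≤ M := by
    filter_upwards [hf.ae_differentiableWithinAt_of_mem (μ := μ), hM] with z hd hn hz
    exact ⟨(hd hz).differentiableAt (hopen.mem_nhds hz), hn hz⟩
  refine LipschitzOnWith.of_dist_le_mul fun x hx y hy => ?_
  have hshift : ∀ᶠ ζ in 𝓝 (0 : E), x + ζ ∈ s ∧ y + ζ ∈ s :=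
    ((continuous_const_add x).tendsto' 0 x (add_zero x)).eventually (hopen.mem_nhds hx) |>.and
      (((continuous_const_add y).tendsto' 0 y (add_zero y)).eventually (hopen.mem_nhds hy))
  -- almost every translate of the segment `[x, y]` meets the bad set in a null set of times
  have hfreq : ∃ᶠ ζ in 𝓝 (0 : E), dist (f (x + ζ)) (f (y + ζ)) ≤ M * dist x y := by
    have hdense := Measure.dense_of_ae (ae_ae_add_add_smul_of_ae hgood x (y - x))
    refine ((mem_closure_iff_frequently.1 (hdense 0)).and_eventually hshift).mono ?_
    rintro ζ ⟨hζ, hxζ, hyζ⟩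
    rw [← dist_add_right x y ζ]
    refine dist_le_of_ae_norm_fderiv_le_on_segment hf (hconv.segment_subset hxζ hyζ) ?_
    rw [add_sub_add_right_eq_sub]
    exact hζ
  have hcont : ∀ z ∈ s, Tendsto (fun ζ => f (z + ζ)) (𝓝 0) (𝓝 (f z)) := fun z hz =>
    (hf.continuousOn.continuousAt (hopen.mem_nhds hz)).tendsto.comp
      ((continuous_const_add z).tendsto' 0 z (add_zero z))
  exact le_of_tendsto_of_frequently ((hcont x hx).dist (hcont y hy)) hfreq

theorem exists_lipschitzOnWith_of_ae_norm_fderiv_le {f : E → ℝ} {M : ℝ≥0} {U : Set E} {y : E}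
    (hU : U ∈ 𝓝 y) (hf : ∃ K, ∃ t ∈ 𝓝 y, LipschitzOnWith K f t)
    (hM : ∀ᵐ z ∂μ, z ∈ U → ‖fderiv ℝ f z‖ ≤ M) : ∃ s ∈ 𝓝 y, LipschitzOnWith M f s := by
  obtain ⟨K, t, ht, hft⟩ := hf
  obtain ⟨r, hr, hball⟩ := Metric.mem_nhds_iff.1 (inter_mem hU ht)
  refine ⟨ball y r, ball_mem_nhds y hr, ?_⟩
  refine (hft.mono (hball.trans inter_subset_right)).of_ae_norm_fderiv_le (μ := μ)
    (convex_ball y r) isOpen_ball ?_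
  filter_upwards [hM] with z hz hzb using hz (hball hzb).1

theorem ae_norm_fderiv_add_le_essSup {U : Set E} (hU : IsOpen U) {u φ : E → ℝ} {C : ℝ}
    {L : ℝ≥0} (hu : ∀ x ∈ U, DifferentiableAt ℝ u x) (hC : ∀ x ∈ U, ‖fderiv ℝ u x‖ ≤ C)
    (hφ : LipschitzOnWith L φ (closure U)) :
    ∀ᵐ x ∂μ, x ∈ U → ‖fderiv ℝ (u + φ) x‖ ≤
      essSup (fun x => ‖fderiv ℝ u x + fderiv ℝ φ x‖) (μ.restrict U) := by
  have hUnhds : ∀ x ∈ U, closure U ∈ 𝓝 x := fun x hx =>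
    mem_of_superset (hU.mem_nhds hx) subset_closure
  have hbdd : IsBoundedUnder (· ≤ ·) (ae (μ.restrict U))
      (fun x => ‖fderiv ℝ u x + fderiv ℝ φ x‖) := by
    refine ⟨C + L, (ae_restrict_iff' hU.measurableSet).2 (Eventually.of_forall fun x hx => ?_)⟩
    exact (norm_add_le _ _).trans
      (add_le_add (hC x hx) (norm_fderiv_le_of_lipschitzOn ℝ (hUnhds x hx) hφ))
  filter_upwards [hφ.ae_differentiableWithinAt_of_mem (μ := μ),
    (ae_restrict_iff' hU.measurableSet).1 (ae_le_essSup hbdd)] with x hφx hx hxU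
  rw [fderiv_add (hu x hxU) ((hφx (subset_closure hxU)).differentiableAt (hUnhds x hxU))]
  exact hx hxU

end

theorem stmt_19_general {n : ℕ} (Ω : Set (EuclideanSpace ℝ (Fin n))) (hΩ : IsOpen Ω)
    (u : EuclideanSpace ℝ (Fin n) → ℝ) (hu : ContDiffOn ℝ 1 u Ω)
    (c : ℝ) (heik : ∀ x ∈ Ω, ‖fderiv ℝ u x‖ = c) :
    ∀ Ω' : Set (EuclideanSpace ℝ (Fin n)), IsOpen Ω' → closure Ω' ⊆ Ω →
      IsCompact (closure Ω') →
    ∀ φ : EuclideanSpace ℝ (Fin n) → ℝ, ∀ L : NNReal,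
      LipschitzOnWith L φ (closure Ω') → (∀ y ∈ frontier Ω', φ y = 0) →
      essSup (fun x => ‖fderiv ℝ u x‖) (volume.restrict Ω') ≤
        essSup (fun x => ‖fderiv ℝ u x + fderiv ℝ φ x‖) (volume.restrict Ω') := by
  intro Ω' hΩ' hsub hcpt φ L hφlip hφ0
  rcases Ω'.eq_empty_or_nonempty with rfl | hne
  · simp only [Measure.restrict_empty]
    exact (essSup_congr_ae (by simp [EventuallyEq])).le
  have hΩ'Ω : ∀ x ∈ Ω', x ∈ Ω := fun x hx => hsub (subset_closure hx)
  have hdiff : ∀ x ∈ Ω', DifferentiableAt ℝ u x := fun x hx =>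
    (hu.differentiableOn one_ne_zero).differentiableAt (hΩ.mem_nhds (hΩ'Ω x hx))
  have hvol : volume Ω' ≠ 0 := (hΩ'.measure_pos volume hne).ne'
  rw [essSup_congr_ae (g := fun _ => c) ((ae_restrict_iff' hΩ'.measurableSet).2
    (Eventually.of_forall fun x hx => heik x (hΩ'Ω x hx))),
    essSup_const c (by simpa [Measure.restrict_eq_zero] using hvol)]
  have hDv := ae_norm_fderiv_add_le_essSup (μ := volume) hΩ' hdiff
    (fun x hx => (heik x (hΩ'Ω x hx)).le) hφlip
  obtain ⟨x₀, hx₀, hbound⟩ :=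
    Measure.exists_mem_of_measure_ne_zero_of_ae hvol (ae_restrict_of_ae hDv)
  set M : ℝ≥0 := ⟨_, (norm_nonneg _).trans (hbound hx₀)⟩
  refine le_of_lipschitzOnWith_of_le_norm_fderiv hΩ' hne hcpt hdiff
    (fun y hy => (heik y (hΩ'Ω y hy)).ge) (fun y hy => ?_) (v := u + φ) (M := M)
    (by simpa using hφlip.continuousOn.neg) (fun y hy => by simp [hφ0 y hy])
  refine exists_lipschitzOnWith_of_ae_norm_fderiv_le (hΩ'.mem_nhds hy) ?_ hDv
  obtain ⟨K, t, ht, hut⟩ := (hu.contDiffAt (hΩ.mem_nhds (hΩ'Ω y hy))).exists_lipschitzOnWith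
  exact ⟨K + L, t ∩ closure Ω', inter_mem ht (mem_of_superset (hΩ'.mem_nhds hy) subset_closure),
    (hut.mono inter_subset_left).add (hφlip.mono inter_subset_right)⟩

theorem stmt_19 {n : ℕ} (Ω : Set (EuclideanSpace ℝ (Fin n))) (hΩ : IsOpen Ω)
    (u : EuclideanSpace ℝ (Fin n) → ℝ) (hu : ContDiffOn ℝ 1 u Ω)
    (c : ℝ) (hc : 0 ≤ c) (heik : ∀ x ∈ Ω, ‖fderiv ℝ u x‖ = c) :
    ∀ Ω' : Set (EuclideanSpace ℝ (Fin n)), IsOpen Ω' → closure Ω' ⊆ Ω →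
      IsCompact (closure Ω') →
    ∀ φ : EuclideanSpace ℝ (Fin n) → ℝ, ∀ L : NNReal,
      LipschitzOnWith L φ (closure Ω') → (∀ y ∈ frontier Ω', φ y = 0) →
      essSup (fun x => ‖fderiv ℝ u x‖) (volume.restrict Ω') ≤
        essSup (fun x => ‖fderiv ℝ u x + fderiv ℝ φ x‖) (volume.restrict Ω') :=
  stmt_19_general Ω hΩ u hu c heik
end
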